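/- Let G be a countable discrete group with a topological partial action ({X_t}, {h_t}) on a locally compact, second countable Hausdorff space X. Then the equivalence relation R = {(r,x,s,y) : x ∈ X_{r⁻¹s}, h_{s⁻¹r}(x) = y} ⊆ G × X × G × X, with the subspace product topology, is an étale equivalence relation: R is σ-compact, the diagonal Δ = {(t,x,t,x)} is open in R, and every point of R has an open neighborhood on which both the range map r(t,x,s,y) = (t,x) and the source map s(t,x,s,y) = (s,y) are homeomorphisms onto open subsets of G × X. -/
import Mathlib

set_option linter.unusedSectionVars false


/-- A partial action of a group `G` on a set `X`. -/
structure PartialAction (G : Type*) [Group G] (X : Type*) where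
  dom : G → Set X
  h : G → X → X
  dom_one : dom 1 = Set.univ
  h_one : ∀ x, h 1 x = x
  bijOn : ∀ t, Set.BijOn (h t) (dom t⁻¹) (dom t)
  image_inter : ∀ t s, h t '' (dom t⁻¹ ∩ dom s) = dom t ∩ dom (t * s)
  hcomp : ∀ t s x, x ∈ dom s⁻¹ ∩ dom (s⁻¹ * t⁻¹) → h t (h s x) = h (t * s) x

/-- A topological partial action: the domains are open and each `h t` is a homeomorphism
of `X_{t⁻¹}` onto `X_t` (continuity of the inverse is `continuousOn t⁻¹`). -/
structure TopPartialAction (G : Type*) [Group G] (X : Type*) [TopologicalSpace X]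
    extends PartialAction G X where
  isOpen_dom : ∀ t, IsOpen (dom t)
  continuousOn : ∀ t, ContinuousOn (h t) (dom t⁻¹)

/-- The relation `(r,x) ∼ (s,y) ↔ x ∈ X_{r⁻¹s} ∧ h_{s⁻¹r}(x) = y`. -/
def PartialAction.rel {G X : Type*} [Group G] (θ : PartialAction G X) :
    G × X → G × X → Prop :=
  fun p q => p.2 ∈ θ.dom (p.1⁻¹ * q.1) ∧ θ.h (q.1⁻¹ * p.1) p.2 = q.2

variable {G X : Type*} [Group G]

/-- The equivalence relation `R ⊆ (G × X) × (G × X)` of a partial action. -/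
def Renv [TopologicalSpace X] (θ : TopPartialAction G X) : Set ((G × X) × (G × X)) :=
  {q | θ.toPartialAction.rel q.1 q.2}

/-- The range map `r(t,x,s,y) = (t,x)` of `R`. -/
def rmap [TopologicalSpace X] (θ : TopPartialAction G X) : ↥(Renv θ) → G × X :=
  fun z => (z : (G × X) × (G × X)).1

/-- The source map `s(t,x,s,y) = (s,y)` of `R`. -/
def smap [TopologicalSpace X] (θ : TopPartialAction G X) : ↥(Renv θ) → G × X :=
  fun z => (z : (G × X) × (G × X)).2

/-! ### Auxiliary lemmas -/

lemma PartialAction.roundtrip (θ : PartialAction G X) (g : G) {x : X}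
    (hx : x ∈ θ.dom g⁻¹) : θ.h g⁻¹ (θ.h g x) = x := by
  have h1 : x ∈ θ.dom g⁻¹ ∩ θ.dom (g⁻¹ * g⁻¹⁻¹) := by
    simp [hx, θ.dom_one]
  have := θ.hcomp g⁻¹ g x h1
  simpa [θ.h_one] using this

lemma PartialAction.mapsTo' (θ : PartialAction G X) (g : G) {x : X}
    (hx : x ∈ θ.dom g⁻¹) : θ.h g x ∈ θ.dom g := (θ.bijOn g).mapsTo hx

section Aux

variable [TopologicalSpace X]

lemma swap_mem_Renv (θ : TopPartialAction G X)
    {p : (G × X) × (G × X)} (hp : p ∈ Renv θ) : p.swap ∈ Renv θ := by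
  obtain ⟨h1, h2⟩ := hp
  have h1' : p.1.2 ∈ θ.toPartialAction.dom (p.2.1⁻¹ * p.1.1)⁻¹ := by
    simpa [mul_inv_rev] using h1
  constructor
  · show p.2.2 ∈ θ.toPartialAction.dom (p.2.1⁻¹ * p.1.1)
    rw [← h2]
    exact θ.toPartialAction.mapsTo' _ h1'
  · show θ.toPartialAction.h (p.1.1⁻¹ * p.2.1) p.2.2 = p.1.2
    rw [← h2]
    have := θ.toPartialAction.roundtrip (p.2.1⁻¹ * p.1.1) h1'
    simpa [mul_inv_rev] using this

variable [TopologicalSpace G] [DiscreteTopology G]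

/-- The basic open slice of `R` with fixed group coordinates. -/
def Uts (θ : TopPartialAction G X) (t s : G) : Set ↥(Renv θ) :=
  {z | (z : (G × X) × (G × X)).1.1 = t ∧ (z : (G × X) × (G × X)).2.1 = s}

lemma isOpen_Uts (θ : TopPartialAction G X) (t s : G) : IsOpen (Uts θ t s) := by
  have hc : Continuous fun z : ↥(Renv θ) =>
      ((z : (G × X) × (G × X)).1.1, (z : (G × X) × (G × X)).2.1) :=
    (continuous_subtype_val.fst.fst).prodMk (continuous_subtype_val.snd.fst)
  have : Uts θ t s = (fun z : ↥(Renv θ) =>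
      ((z : (G × X) × (G × X)).1.1, (z : (G × X) × (G × X)).2.1)) ⁻¹' {(t, s)} := by
    ext z; simp [Uts, Prod.ext_iff]
  rw [this]
  exact (isOpen_discrete _).preimage hc

lemma rmap_local (θ : TopPartialAction G X) (t s : G) :
    Set.InjOn (rmap θ) (Uts θ t s) ∧
    ∀ W ⊆ Uts θ t s, IsOpen W → IsOpen (rmap θ '' W) := by
  constructor
  · rintro ⟨⟨⟨t1, x1⟩, ⟨s1, y1⟩⟩, hz⟩ ⟨hz1, hz2⟩ ⟨⟨⟨t2, x2⟩, ⟨s2, y2⟩⟩, hz'⟩ ⟨hz1', hz2'⟩ heq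
    simp only [rmap, Prod.ext_iff] at heq
    obtain ⟨ht12, hx12⟩ := heq
    simp only at hz1 hz2 hz1' hz2' ht12 hx12
    have hs12 : s1 = s2 := hz2.trans hz2'.symm
    subst ht12; subst hx12; subst hs12
    obtain ⟨_, hy1⟩ := hz
    obtain ⟨_, hy2⟩ := hz'
    simp only at hy1 hy2
    apply Subtype.ext
    simp [Prod.ext_iff, ← hy1, ← hy2]
  · intro W hWU hW
    obtain ⟨V, hV, rfl⟩ := isOpen_induced_iff.mp hW
    set ψ : X → (G × X) × (G × X) := fun x => ((t, x), (s, θ.toPartialAction.h (s⁻¹ * t) x))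
      with hψdef
    have hψc : ContinuousOn ψ (θ.toPartialAction.dom (t⁻¹ * s)) := by
      apply ContinuousOn.prodMk
      · exact (continuous_const.prodMk continuous_id).continuousOn
      · apply ContinuousOn.prodMk continuousOn_const
        have := θ.continuousOn (s⁻¹ * t)
        simpa [mul_inv_rev] using this
    have himg : rmap θ '' (Subtype.val ⁻¹' V) =
        {t} ×ˢ (θ.toPartialAction.dom (t⁻¹ * s) ∩ ψ ⁻¹' V) := by
      ext ⟨g, x⟩
      constructor
      · rintro ⟨⟨⟨⟨t1, x1⟩, ⟨s1, y1⟩⟩, hz⟩, hzV, heq⟩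
        obtain ⟨hz1, hz2⟩ := hWU hzV
        simp only at hz1 hz2
        subst hz1; subst hz2
        obtain ⟨hdom, hy⟩ := hz
        simp only at hdom hy
        simp only [rmap, Prod.ext_iff] at heq
        obtain ⟨hg, hx⟩ := heq
        subst hg; subst hx
        refine ⟨rfl, hdom, ?_⟩
        show ψ x1 ∈ V
        have hpsi : ψ x1 = ((t1, x1), (s1, y1)) := by simp [hψdef, hy]
        rw [hpsi]
        exact hzV
      · rintro ⟨hg, hx, hψV⟩
        simp only [Set.mem_singleton_iff] at hg
        subst hg
        have hmem : ψ x ∈ Renv θ := ⟨hx, rfl⟩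
        exact ⟨⟨ψ x, hmem⟩, hψV, rfl⟩
    rw [himg]
    exact (isOpen_discrete _).prod
      (hψc.isOpen_inter_preimage (θ.isOpen_dom _) hV)

/-- The flip homeomorphism of `R`. -/
def flipR (θ : TopPartialAction G X) : ↥(Renv θ) → ↥(Renv θ) :=
  fun z => ⟨Prod.swap z.val, swap_mem_Renv θ z.2⟩

lemma continuous_flipR (θ : TopPartialAction G X) : Continuous (flipR θ) :=
  Continuous.subtype_mk (continuous_swap.comp continuous_subtype_val) _

lemma flipR_flipR (θ : TopPartialAction G X) (z : ↥(Renv θ)) :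
    flipR θ (flipR θ z) = z := Subtype.ext (Prod.swap_swap _)

lemma image_flipR (θ : TopPartialAction G X) (W : Set ↥(Renv θ)) :
    flipR θ '' W = flipR θ ⁻¹' W := by
  ext z
  constructor
  · rintro ⟨w, hw, rfl⟩
    show flipR θ (flipR θ w) ∈ W
    rw [flipR_flipR]
    exact hw
  · intro hz
    exact ⟨flipR θ z, hz, flipR_flipR θ z⟩

lemma flipR_mem_Uts (θ : TopPartialAction G X) {t s : G} {z : ↥(Renv θ)}
    (hz : z ∈ Uts θ t s) : flipR θ z ∈ Uts θ s t := ⟨hz.2, hz.1⟩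

end Aux

/-- For a topological partial action of a countable discrete group `G` on a locally
compact second countable Hausdorff space `X`, the equivalence relation `R` (with the
subspace product topology) is étale: `R` is σ-compact, the diagonal is open in `R`, and
every point of `R` has an open neighborhood on which the range and source maps are
homeomorphisms onto open subsets of `G × X`. -/
theorem renv_etale [Countable G] [TopologicalSpace G] [DiscreteTopology G]
    [TopologicalSpace X] [LocallyCompactSpace X] [T2Space X] [SecondCountableTopology X]
    (θ : TopPartialAction G X) :
    SigmaCompactSpace ↥(Renv θ) ∧
    IsOpen {z : ↥(Renv θ) | (z : (G × X) × (G × X)).1 = (z : (G × X) × (G × X)).2} ∧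
    (∀ z : ↥(Renv θ), ∃ U : Set ↥(Renv θ), IsOpen U ∧ z ∈ U ∧
      (Set.InjOn (rmap θ) U ∧ IsOpen (rmap θ '' U) ∧
        ∀ W ⊆ U, IsOpen W → IsOpen (rmap θ '' W)) ∧
      (Set.InjOn (smap θ) U ∧ IsOpen (smap θ '' U) ∧
        ∀ W ⊆ U, IsOpen W → IsOpen (smap θ '' W))) := by
  refine ⟨?_, ?_, ?_⟩
  · -- σ-compactness
    rw [← isSigmaCompact_iff_sigmaCompactSpace]
    have hR : Renv θ = ⋃ p : G × G,
        (fun x => ((p.1, x), (p.2, θ.toPartialAction.h (p.2⁻¹ * p.1) x))) ''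
          θ.toPartialAction.dom (p.1⁻¹ * p.2) := by
      ext ⟨⟨t, x⟩, ⟨s, y⟩⟩
      simp only [Set.mem_iUnion, Set.mem_image]
      constructor
      · rintro ⟨hdom, hy⟩
        exact ⟨(t, s), x, hdom, by simp_all⟩
      · rintro ⟨⟨t', s'⟩, x', hx', heq⟩
        simp only [Prod.ext_iff] at heq
        obtain ⟨⟨h1, h2⟩, h3, h4⟩ := heq
        subst h1; subst h2; subst h3
        exact ⟨hx', h4⟩
    rw [hR]
    apply isSigmaCompact_iUnion
    rintro ⟨t, s⟩
    apply IsSigmaCompact.image_of_continuousOn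
    · -- dom (t⁻¹ * s) is σ-compact
      rw [isSigmaCompact_iff_sigmaCompactSpace]
      have : LocallyCompactSpace ↥(θ.toPartialAction.dom (t⁻¹ * s)) :=
        (θ.isOpen_dom _).locallyCompactSpace
      infer_instance
    · apply ContinuousOn.prodMk
      · exact (continuous_const.prodMk continuous_id).continuousOn
      · apply ContinuousOn.prodMk continuousOn_const
        have := θ.continuousOn (s⁻¹ * t)
        simpa [mul_inv_rev] using this
  · -- the diagonal is open
    have heq : {z : ↥(Renv θ) | (z : (G × X) × (G × X)).1 = (z : (G × X) × (G × X)).2} =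
        {z : ↥(Renv θ) | (z : (G × X) × (G × X)).1.1 = (z : (G × X) × (G × X)).2.1} := by
      ext ⟨⟨⟨t, x⟩, ⟨s, y⟩⟩, hz⟩
      simp only [Set.mem_setOf_eq, Prod.ext_iff]
      constructor
      · rintro ⟨h1, _⟩
        exact h1
      · rintro rfl
        obtain ⟨hdom, hy⟩ := hz
        simp only at hy
        rw [inv_mul_cancel, θ.toPartialAction.h_one] at hy
        exact ⟨rfl, hy⟩
    rw [heq]
    have hc : Continuous fun z : ↥(Renv θ) =>
        ((z : (G × X) × (G × X)).1.1, (z : (G × X) × (G × X)).2.1) :=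
      (continuous_subtype_val.fst.fst).prodMk (continuous_subtype_val.snd.fst)
    have : {z : ↥(Renv θ) | (z : (G × X) × (G × X)).1.1 = (z : (G × X) × (G × X)).2.1} =
        (fun z : ↥(Renv θ) =>
          ((z : (G × X) × (G × X)).1.1, (z : (G × X) × (G × X)).2.1)) ⁻¹'
          Set.diagonal G := by
      ext z; simp [Set.diagonal, eq_comm]
    rw [this]
    exact (isOpen_discrete _).preimage hc
  · -- local homeomorphism property
    intro z
    set t := (z : (G × X) × (G × X)).1.1 with ht
    set s := (z : (G × X) × (G × X)).2.1 with hs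
    obtain ⟨hinjr, hopenr⟩ := rmap_local θ t s
    obtain ⟨hinjr', hopenr'⟩ := rmap_local θ s t
    have hsmap : ∀ W ⊆ Uts θ t s, IsOpen W → IsOpen (smap θ '' W) := by
      intro W hWU hW
      have himg : smap θ '' W = rmap θ '' (flipR θ '' W) := by
        ext p
        simp only [Set.mem_image]
        constructor
        · rintro ⟨w, hw, rfl⟩
          exact ⟨flipR θ w, ⟨w, hw, rfl⟩, rfl⟩
        · rintro ⟨w', ⟨w, hw, rfl⟩, rfl⟩
          exact ⟨w, hw, rfl⟩
      rw [himg]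
      apply hopenr'
      · rintro w' ⟨w, hw, rfl⟩
        exact flipR_mem_Uts θ (hWU hw)
      · rw [image_flipR]
        exact hW.preimage (continuous_flipR θ)
    refine ⟨Uts θ t s, isOpen_Uts θ t s, ⟨rfl, rfl⟩,
      ⟨hinjr, hopenr _ le_rfl (isOpen_Uts θ t s), hopenr⟩,
      ⟨?_, hsmap _ le_rfl (isOpen_Uts θ t s), hsmap⟩⟩
    intro a ha b hb hab
    have hab' : rmap θ (flipR θ a) = rmap θ (flipR θ b) := hab
    have := hinjr' (flipR_mem_Uts θ ha) (flipR_mem_Uts θ hb) hab'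
    have h2 := congrArg (flipR θ) this
    rwa [flipR_flipR, flipR_flipR] at h2
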